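/- arXiv:0810.2010 — 2 statements merged into one kernel-verified Lean document; each statement's English description precedes it below -/
import Mathlib

section
/- For a Poisson random variable Y with mean μ > 0 and any bounded g : ℕ → ℝ, E[(Y - μ) · g(Y)] = E[Y · (g(Y) - g(Y-1))], where Y · g(Y-1) is interpreted as 0 when Y = 0. -/
/-! The Poisson weights satisfy `(k + 1) p(k + 1) = μ p(k)`, so reindexing `k ↦ k + 1` turns
`∑ k g(k - 1) p(k)` into `μ ∑ g(k) p(k)`; the `k = 0` term vanishes, which is why the value of
`g (0 - 1)` is irrelevant. Subtracting this from `∑ k g(k) p(k)` gives the identity. -/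

open scoped BigOperators

noncomputable def poissonPMF (μ : ℝ) (k : ℕ) : ℝ :=
  Real.exp (-μ) * μ ^ k / (Nat.factorial k)

noncomputable def poissonWeight {N : ℕ} (μ : Fin N → ℝ) (y : Fin N → ℕ) : ℝ :=
  ∏ i, poissonPMF (μ i) (y i)

theorem Summable.mul_of_abs_le {ι : Type*} {a g : ι → ℝ} (ha : Summable a) {C : ℝ}
    (hg : ∀ i, |g i| ≤ C) : Summable fun i => g i * a i :=
  ha.abs.mul_left C |>.of_norm_bounded fun i => by
    rw [Real.norm_eq_abs, abs_mul]
    exact mul_le_mul_of_nonneg_right (hg i) (abs_nonneg _)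

namespace poissonPMF

theorem succ_mul (μ : ℝ) (k : ℕ) :
    ((k : ℝ) + 1) * poissonPMF μ (k + 1) = μ * poissonPMF μ k := by
  simp only [poissonPMF, Nat.factorial_succ, Nat.cast_mul, Nat.cast_succ, pow_succ]
  field_simp

theorem summable (μ : ℝ) : Summable (poissonPMF μ) := by
  have h : poissonPMF μ = fun k => Real.exp (-μ) * (μ ^ k / k.factorial) := by
    ext k; exact mul_div_assoc ..
  exact h ▸ (Real.summable_pow_div_factorial μ).mul_left _

theorem hasSum_natCast_mul_comp_pred {μ s : ℝ} {f : ℕ → ℝ}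
    (hf : HasSum (fun k => f k * poissonPMF μ k) s) :
    HasSum (fun k : ℕ => (k : ℝ) * f (k - 1) * poissonPMF μ k) (μ * s) := by
  rw [← hasSum_nat_add_iff' 1]
  have hshift : ∀ k : ℕ, ((k + 1 : ℕ) : ℝ) * f (k + 1 - 1) * poissonPMF μ (k + 1)
      = μ * (f k * poissonPMF μ k) := fun k => by
    rw [Nat.add_sub_cancel, Nat.cast_succ, mul_right_comm, succ_mul]
    ring
  simpa only [hshift, Finset.range_one, Finset.sum_singleton, Nat.cast_zero, zero_mul,
    sub_zero] using hf.mul_left μ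

theorem summable_natCast_mul (μ : ℝ) : Summable fun k : ℕ => (k : ℝ) * poissonPMF μ k := by
  simpa only [mul_one] using
    (hasSum_natCast_mul_comp_pred (f := fun _ => 1) (by simpa only [one_mul] using (summable μ).hasSum)).summable

end poissonPMF

theorem poisson_centered_identity_general (μ : ℝ) (g : ℕ → ℝ)
    (hbdd : ∃ C : ℝ, ∀ k, |g k| ≤ C) :
    ∑' k : ℕ, ((k : ℝ) - μ) * g k * poissonPMF μ k
      = ∑' k : ℕ, (k : ℝ) * (g k - g (k - 1)) * poissonPMF μ k := by
  obtain ⟨C, hC⟩ := hbdd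
  have hg : HasSum (fun k => g k * poissonPMF μ k) (∑' k, g k * poissonPMF μ k) :=
    ((poissonPMF.summable μ).mul_of_abs_le hC).hasSum
  have hkg : HasSum (fun k : ℕ => (k : ℝ) * g k * poissonPMF μ k)
      (∑' k : ℕ, (k : ℝ) * g k * poissonPMF μ k) :=
    (((poissonPMF.summable_natCast_mul μ).mul_of_abs_le hC).congr fun k => by ring).hasSum
  have hμg : HasSum (fun k => μ * g k * poissonPMF μ k) (μ * ∑' k, g k * poissonPMF μ k) :=
    (hg.mul_left μ).congr_fun fun k => mul_assoc ..
  have hlhs := hkg.sub hμg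
  have hrhs := hkg.sub (poissonPMF.hasSum_natCast_mul_comp_pred hg)
  simp only [← sub_mul, ← mul_sub] at hlhs hrhs
  rw [hlhs.tsum_eq, hrhs.tsum_eq]

theorem poisson_centered_identity (μ : ℝ) (hμ : 0 < μ) (g : ℕ → ℝ)
    (hbdd : ∃ C : ℝ, ∀ k, |g k| ≤ C) :
    ∑' k : ℕ, ((k : ℝ) - μ) * g k * poissonPMF μ k
      = ∑' k : ℕ, (k : ℝ) * (g k - g (k - 1)) * poissonPMF μ k :=
  poisson_centered_identity_general μ g hbdd
end

section
/- For a single Poisson observation Y with true mean μ_0 > 0, an independent replicate Y* ~ Poisson(μ_0), and a fitted-value function ŷ : ℕ → (0, ∞) that is bounded above and below away from 0, the following identity holds: E_Y E_{Y*}[ log g(Y* | ŷ(Y)) ] = E_Y[ log g(Y | ŷ(Y)) ] − E_Y[ Y log ŷ(Y) − Y log ŷ(Y − 1) ], where log g(y | m) = −m + y log m − log(y!) is the Poisson log-likelihood and Y log ŷ(Y−1) is 0 when Y = 0. -/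
open scoped BigOperators

noncomputable def poissonLogLik (y : ℕ) (m : ℝ) : ℝ :=
  -m + (y : ℝ) * Real.log m - Real.log (Nat.factorial y)

/-! Expanding `log g(y | m) = -m + y log m - log y!`, the inner expectation over the replicate is
`-ŷ(k) + μ₀ log ŷ(k) - E[log Y!]`, because `E[Y] = μ₀`. Hence the in-sample expected
log-likelihood exceeds the out-of-sample one by `E[Y log ŷ(Y)] - μ₀ E[log ŷ(Y)]`, and the
Stein–Chen identity `E[Y f(Y - 1)] = μ₀ E[f(Y)]`, applied to the bounded `f = log ŷ`, rewrites
`μ₀ E[log ŷ(Y)]` as `E[Y log ŷ(Y - 1)]`. All series converge absolutely since `ŷ` and `log ŷ` are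
bounded and `log k! ≤ k²` is dominated by the finite second moment. -/

open Real
open scoped Nat

lemma Summable.bounded_mul {ι : Type*} {f g : ι → ℝ} {M : ℝ} (hg : Summable g)
    (hf : ∀ i, |f i| ≤ M) : Summable fun i => f i * g i :=
  (hg.abs.mul_left M).of_norm_bounded fun i => by
    rw [Real.norm_eq_abs, abs_mul]
    exact mul_le_mul_of_nonneg_right (hf i) (abs_nonneg _)

lemma Real.log_factorial_le_mul_self (k : ℕ) : log k ! ≤ k * k :=
  calc log k ! ≤ log ((k : ℝ) ^ k) :=
        log_le_log (by positivity) (by exact_mod_cast k.factorial_le_pow)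
    _ = k * log k := log_pow k k
    _ ≤ k * k := mul_le_mul_of_nonneg_left (log_le_self k.cast_nonneg) k.cast_nonneg

lemma poissonPMF_nonneg {μ : ℝ} (hμ : 0 ≤ μ) (k : ℕ) : 0 ≤ poissonPMF μ k := by
  unfold poissonPMF
  positivity

lemma hasSum_poissonPMF (μ : ℝ) : HasSum (poissonPMF μ) 1 := by
  convert! (NormedSpace.expSeries_div_hasSum_exp μ).mul_left (exp (-μ)) using 1
  · funext k
    simp only [poissonPMF, mul_div_assoc]
  · rw [← exp_eq_exp_ℝ, ← exp_add, neg_add_cancel, exp_zero]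

lemma succ_mul_poissonPMF_succ (μ : ℝ) (k : ℕ) :
    (k + 1) * poissonPMF μ (k + 1) = μ * poissonPMF μ k := by
  simp only [poissonPMF, Nat.factorial_succ, Nat.cast_mul, Nat.cast_succ, pow_succ]
  field_simp

-- Stein–Chen identity; the truncation `0 - 1 = 0` is harmless since the `k = 0` term vanishes.
lemma hasSum_natCast_mul_pred_mul_poissonPMF {μ a : ℝ} {f : ℕ → ℝ}
    (h : HasSum (fun k => f k * poissonPMF μ k) a) :
    HasSum (fun k : ℕ => k * f (k - 1) * poissonPMF μ k) (μ * a) := by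
  rw [← hasSum_nat_add_iff' 1]
  simp only [Finset.sum_range_one, Nat.cast_zero, zero_mul, sub_zero, Nat.add_sub_cancel]
  convert! h.mul_left μ using 1
  funext k
  push_cast
  linear_combination f k * succ_mul_poissonPMF_succ μ k

lemma hasSum_natCast_mul_poissonPMF (μ : ℝ) :
    HasSum (fun k : ℕ => k * poissonPMF μ k) μ := by
  simpa using hasSum_natCast_mul_pred_mul_poissonPMF (f := fun _ => 1) (a := 1)
    (by simpa using hasSum_poissonPMF μ)

lemma summable_natCast_mul_self_mul_poissonPMF (μ : ℝ) :
    Summable fun k : ℕ => k * k * poissonPMF μ k := by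
  have h := hasSum_natCast_mul_pred_mul_poissonPMF (f := fun j => j + 1)
    (by simpa [add_mul] using (hasSum_natCast_mul_poissonPMF μ).add (hasSum_poissonPMF μ))
  refine h.summable.congr fun k => ?_
  rcases k with _ | k <;> simp

lemma summable_log_factorial_mul_poissonPMF {μ : ℝ} (hμ : 0 ≤ μ) :
    Summable fun k : ℕ => log k ! * poissonPMF μ k :=
  (summable_natCast_mul_self_mul_poissonPMF μ).of_nonneg_of_le
    (fun k => mul_nonneg (log_nonneg (Nat.one_le_cast.mpr k.factorial_pos))
      (poissonPMF_nonneg hμ k))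
    fun k => mul_le_mul_of_nonneg_right (log_factorial_le_mul_self k) (poissonPMF_nonneg hμ k)

lemma hasSum_poissonLogLik_mul_poissonPMF {μ : ℝ} (hμ : 0 ≤ μ) (m : ℝ) :
    HasSum (fun j => poissonLogLik j m * poissonPMF μ j)
      (-m + μ * log m - ∑' j : ℕ, log j ! * poissonPMF μ j) := by
  convert! (((hasSum_poissonPMF μ).mul_left (-m)).add
    ((hasSum_natCast_mul_poissonPMF μ).mul_left (log m))).sub
    (summable_log_factorial_mul_poissonPMF hμ).hasSum using 1
  · funext j
    simp only [poissonLogLik]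
    ring
  · ring

theorem univariate_cAIC (μ₀ : ℝ) (hμ : 0 < μ₀) (yhat : ℕ → ℝ) (c C : ℝ)
    (hc : 0 < c) (hbdd : ∀ k, c ≤ yhat k ∧ yhat k ≤ C) :
    ∑' k : ℕ, (∑' j : ℕ, poissonLogLik j (yhat k) * poissonPMF μ₀ j) * poissonPMF μ₀ k
      = (∑' k : ℕ, poissonLogLik k (yhat k) * poissonPMF μ₀ k)
        - ∑' k : ℕ,
            ((k : ℝ) * Real.log (yhat k) - (k : ℝ) * Real.log (yhat (k - 1))) *
              poissonPMF μ₀ k := by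
  have hp := hasSum_poissonPMF μ₀
  have hlog_bdd (k : ℕ) : |log (yhat k)| ≤ max |log c| |log C| :=
    abs_le_max_abs_abs (log_le_log hc (hbdd k).1) (log_le_log (hc.trans_le (hbdd k).1) (hbdd k).2)
  obtain ⟨E, hE⟩ := hp.summable.bounded_mul fun k => abs_le_max_abs_abs (hbdd k).1 (hbdd k).2
  obtain ⟨L, hL⟩ := hp.summable.bounded_mul hlog_bdd
  obtain ⟨K, hK⟩ := (hasSum_natCast_mul_poissonPMF μ₀).summable.bounded_mul hlog_bdd
  obtain ⟨A, hA⟩ := summable_log_factorial_mul_poissonPMF hμ.le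
  have hLHS : HasSum (fun k => (∑' j : ℕ, poissonLogLik j (yhat k) * poissonPMF μ₀ j) *
      poissonPMF μ₀ k) (-E + μ₀ * L - A) := by
    convert! (hE.neg.add (hL.mul_left μ₀)).sub (hp.mul_left A) using 1
    · funext k
      rw [(hasSum_poissonLogLik_mul_poissonPMF hμ.le _).tsum_eq, hA.tsum_eq]
      ring
    · ring
  have hRHS₁ : HasSum (fun k => poissonLogLik k (yhat k) * poissonPMF μ₀ k) (-E + K - A) := by
    convert! (hE.neg.add hK).sub hA using 1
    funext k
    simp only [poissonLogLik]
    ring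
  have hRHS₂ : HasSum (fun k : ℕ =>
      ((k : ℝ) * log (yhat k) - k * log (yhat (k - 1))) * poissonPMF μ₀ k) (K - μ₀ * L) := by
    convert! hK.sub (hasSum_natCast_mul_pred_mul_poissonPMF hL) using 1
    funext k
    ring
  rw [hLHS.tsum_eq, hRHS₁.tsum_eq, hRHS₂.tsum_eq]
  ring
end
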